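/- arXiv:1911.05272 — 4 statements merged into one kernel-verified Lean document; each statement's English description precedes it below -/
import Mathlib

section
/- For all real numbers a > 0 and b, the integral ∫₀^∞ x² · exp(-a x²) · sinh(b x) dx equals (√π · (2a + b²) · exp(b²/(4a)) · erf(b/(2√a))) / (8 a^{5/2}) + b / (4 a²). -/
open Real MeasureTheory Set Filter Topology

noncomputable def erf (z : ℝ) : ℝ := 2 / Real.sqrt π * ∫ u in (0:ℝ)..z, Real.exp (-u ^ 2)

/-!
Completing the square, `exp (-a x²) exp (± b x) = exp (b²/(4a)) exp (-a (x ∓ m)²)` with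
`m = b/(2a)`, so the integral is half the difference of two second moments of shifted Gaussians
over the half-line. These have an explicit primitive (elementary plus an `erf` term), which gives
each moment in closed form with a factor `1 + erf (± b/(2√a))`; since `erf` is odd, the difference
leaves `2 erf (b/(2√a))`.
-/

theorem hasDerivAt_erf (z : ℝ) : HasDerivAt erf (2 / √π * exp (-z ^ 2)) z := by
  have hc : Continuous fun u : ℝ => exp (-u ^ 2) := by fun_prop
  exact (intervalIntegral.integral_hasDerivAt_right (hc.intervalIntegrable 0 z)
    (hc.stronglyMeasurableAtFilter _ _) hc.continuousAt).const_mul _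

theorem tendsto_erf_atTop : Tendsto erf atTop (𝓝 1) := by
  have hi : IntegrableOn (fun u : ℝ => exp (-u ^ 2)) (Ioi 0) := by
    simpa using (integrable_exp_neg_mul_sq one_pos).integrableOn
  have h := (intervalIntegral_tendsto_integral_Ioi 0 hi tendsto_id).const_mul (2 / √π)
  have hgauss : ∫ u in Ioi (0:ℝ), exp (-u ^ 2) = √π / 2 := by
    simpa using integral_gaussian_Ioi 1
  have hπ : √π ≠ 0 := by positivity
  rwa [hgauss, div_mul_div_cancel₀ hπ, div_self two_ne_zero] at h

theorem erf_neg (z : ℝ) : erf (-z) = -erf z := by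
  have h := intervalIntegral.integral_comp_neg (a := 0) (b := z) fun u => exp (-u ^ 2)
  simp only [neg_zero, even_two, Even.neg_pow] at h
  rw [erf, erf, intervalIntegral.integral_symm, ← h, mul_neg]

theorem tendsto_add_mul_exp_neg_mul_sq_atTop {a : ℝ} (ha : 0 < a) (c : ℝ) :
    Tendsto (fun t : ℝ => (t + c) * exp (-a * t ^ 2)) atTop (𝓝 0) := by
  have h (s : ℝ) := (tendsto_rpow_abs_mul_exp_neg_mul_sq_cocompact ha s).mono_left
    atTop_le_cocompact
  have h := (h 1).add ((h 0).const_mul c)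
  rw [mul_zero, add_zero] at h
  refine h.congr' ?_
  filter_upwards [eventually_gt_atTop 0] with t ht
  rw [rpow_one, rpow_zero, abs_of_pos ht]
  ring

noncomputable def gaussSqPrimitive (a m x : ℝ) : ℝ :=
  -(x + m) * exp (-a * (x - m) ^ 2) / (2 * a) +
    (1 / (2 * a) + m ^ 2) * (√π / (2 * √a)) * erf (√a * (x - m))

section gaussSqPrimitive

variable {a : ℝ} (ha : 0 < a) (m : ℝ)
include ha

theorem hasDerivAt_gaussSqPrimitive (x : ℝ) :
    HasDerivAt (gaussSqPrimitive a m) (x ^ 2 * exp (-a * (x - m) ^ 2)) x := by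
  have hsub : HasDerivAt (fun x : ℝ => x - m) 1 x := (hasDerivAt_id x).sub_const m
  have hexp := ((hsub.pow 2).const_mul (-a)).exp
  have herf := (hasDerivAt_erf _).comp x (hsub.const_mul √a)
  have h := ((((hasDerivAt_id x).add_const m).neg.mul hexp).div_const (2 * a)).add
    (herf.const_mul ((1 / (2 * a) + m ^ 2) * (√π / (2 * √a))))
  have hsq : -(√a * (x - m)) ^ 2 = -a * (x - m) ^ 2 := by
    rw [mul_pow, sq_sqrt ha.le]; ring
  rw [hsq] at h
  have : √a ≠ 0 := by positivity
  have : √π ≠ 0 := by positivity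
  refine HasDerivAt.congr_deriv (f := gaussSqPrimitive a m) h ?_
  simp only [Pi.neg_apply, Pi.pow_apply, id]
  field_simp
  ring

theorem tendsto_gaussSqPrimitive_atTop :
    Tendsto (gaussSqPrimitive a m) atTop (𝓝 ((1 / (2 * a) + m ^ 2) * (√π / (2 * √a)))) := by
  have hshift : Tendsto (fun x : ℝ => x - m) atTop atTop :=
    tendsto_atTop_add_const_right _ _ tendsto_id
  have hmoment : Tendsto (fun x : ℝ => (x + m) * exp (-a * (x - m) ^ 2)) atTop (𝓝 0) := by
    refine ((tendsto_add_mul_exp_neg_mul_sq_atTop ha (2 * m)).comp hshift).congr fun x => ?_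
    simp only [Function.comp_apply]
    ring
  have herf : Tendsto (fun x : ℝ => erf (√a * (x - m))) atTop (𝓝 1) :=
    tendsto_erf_atTop.comp (hshift.const_mul_atTop (sqrt_pos.mpr ha))
  convert (hmoment.neg.div_const (2 * a)).add
    (herf.const_mul ((1 / (2 * a) + m ^ 2) * (√π / (2 * √a)))) using 1
  · ext x; simp only [gaussSqPrimitive]; ring
  · simp

theorem integrableOn_sq_mul_exp_neg_mul_sub_sq :
    IntegrableOn (fun x : ℝ => x ^ 2 * exp (-a * (x - m) ^ 2)) (Ioi 0) :=
  integrableOn_Ioi_deriv_of_nonneg' (fun x _ => hasDerivAt_gaussSqPrimitive ha m x)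
    (fun x _ => by positivity) (tendsto_gaussSqPrimitive_atTop ha m)

theorem integral_Ioi_sq_mul_exp_neg_mul_sub_sq :
    ∫ x in Ioi 0, x ^ 2 * exp (-a * (x - m) ^ 2) =
      (1 / (2 * a) + m ^ 2) * (√π / (2 * √a)) * (1 + erf (√a * m)) +
        m * exp (-a * m ^ 2) / (2 * a) := by
  rw [integral_Ioi_of_hasDerivAt_of_nonneg' (fun x _ => hasDerivAt_gaussSqPrimitive ha m x)
    (fun x _ => by positivity) (tendsto_gaussSqPrimitive_atTop ha m)]
  simp only [gaussSqPrimitive, zero_sub, zero_add, mul_neg, erf_neg, even_two, Even.neg_pow]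
  ring

end gaussSqPrimitive

theorem exp_neg_mul_sq_mul_exp {a : ℝ} (ha : a ≠ 0) (b x : ℝ) :
    exp (-a * x ^ 2) * exp (b * x) =
      exp (b ^ 2 / (4 * a)) * exp (-a * (x - b / (2 * a)) ^ 2) := by
  rw [← exp_add, ← exp_add]
  congr 1
  field_simp
  ring

section

variable {a : ℝ} (ha : 0 < a) (b : ℝ)
include ha

theorem integrableOn_sq_mul_exp_neg_mul_sq_mul_exp :
    IntegrableOn (fun x : ℝ => x ^ 2 * exp (-a * x ^ 2) * exp (b * x)) (Ioi 0) := by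
  simp_rw [mul_assoc, exp_neg_mul_sq_mul_exp ha.ne', mul_left_comm _ (exp _)]
  exact (integrableOn_sq_mul_exp_neg_mul_sub_sq ha _).const_mul _

theorem integral_Ioi_sq_mul_exp_neg_mul_sq_mul_exp :
    ∫ x in Ioi 0, x ^ 2 * exp (-a * x ^ 2) * exp (b * x) =
      √π * (2 * a + b ^ 2) * exp (b ^ 2 / (4 * a)) * (1 + erf (b / (2 * √a))) /
          (8 * a ^ 2 * √a) + b / (4 * a ^ 2) := by
  simp_rw [mul_assoc, exp_neg_mul_sq_mul_exp ha.ne', mul_left_comm _ (exp _)]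
  rw [integral_const_mul, integral_Ioi_sq_mul_exp_neg_mul_sub_sq ha]
  have hsa : √a ≠ 0 := by positivity
  have harg : √a * (b / (2 * a)) = b / (2 * √a) := by
    field_simp; rw [sq_sqrt ha.le]; ring
  have hexp : exp (-a * (b / (2 * a)) ^ 2) = (exp (b ^ 2 / (4 * a)))⁻¹ := by
    rw [← exp_neg]; congr 1; field_simp; ring
  rw [harg, hexp]
  field_simp
  ring

end

theorem stmt1 (a b : ℝ) (ha : 0 < a) :
    ∫ x in Ioi (0 : ℝ), x ^ 2 * Real.exp (-a * x ^ 2) * Real.sinh (b * x) =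
      Real.sqrt π * (2 * a + b ^ 2) * Real.exp (b ^ 2 / (4 * a)) *
          erf (b / (2 * Real.sqrt a)) / (8 * a ^ ((5 : ℝ) / 2)) +
        b / (4 * a ^ 2) := by
  have hsinh : (fun x : ℝ => x ^ 2 * exp (-a * x ^ 2) * sinh (b * x)) = fun x =>
      (x ^ 2 * exp (-a * x ^ 2) * exp (b * x) - x ^ 2 * exp (-a * x ^ 2) * exp (-b * x)) / 2 := by
    ext x; rw [sinh_eq, ← neg_mul]; ring
  have hpow : a ^ ((5 : ℝ) / 2) = a ^ 2 * √a := by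
    rw [show (5 : ℝ) / 2 = (2 : ℕ) + 1 / 2 by norm_num, rpow_add ha, rpow_natCast, sqrt_eq_rpow]
  rw [hsinh, integral_div, integral_sub (integrableOn_sq_mul_exp_neg_mul_sq_mul_exp ha b)
    (integrableOn_sq_mul_exp_neg_mul_sq_mul_exp ha (-b)),
    integral_Ioi_sq_mul_exp_neg_mul_sq_mul_exp ha, integral_Ioi_sq_mul_exp_neg_mul_sq_mul_exp ha,
    neg_sq, neg_div, erf_neg, hpow]
  ring
end

section
/- For all real numbers a > 0 and b, the integral ∫₀^∞ x³ · exp(-a x²) · sinh(b x) dx equals √π · b · (6a + b²) · exp(b²/(4a)) / (16 a^{7/2}). -/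
open Real MeasureTheory Set

/-! The integrand is even, so the half-line integral is half of `∫ x³ e^{-ax² + bx}` over `ℝ`:
writing `sinh` through exponentials, the term with `e^{-bx}` is the reflection of the one with
`e^{bx}`. Completing the square, `-ax² + bx = -a(x - c)² + b²/(4a)` with `c = b/(2a)`, so after the
shift `x ↦ x + c` the integral is `e^{b²/(4a)} ∫ (x + c)³ e^{-ax²}`. The odd Gaussian moments vanish
and `∫ x² e^{-ax²} = √(π/a)/(2a)` (integrate the derivative of `x e^{-ax²}`), which leaves
`√(π/a) (3c/(2a) + c³)`. -/

section Gaussian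

variable {a : ℝ}

lemma integrable_pow_mul_exp_neg_mul_sq (ha : 0 < a) (n : ℕ) :
    Integrable fun x : ℝ => x ^ n * exp (-a * x ^ 2) := by
  have hn : (-1 : ℝ) < n := by linarith [n.cast_nonneg (α := ℝ)]
  simpa using integrable_rpow_mul_exp_neg_mul_sq ha hn

lemma integral_pow_mul_exp_neg_mul_sq_of_odd {n : ℕ} (hn : Odd n) (a : ℝ) :
    ∫ x : ℝ, x ^ n * exp (-a * x ^ 2) = 0 := by
  have h := integral_neg_eq_self (fun x : ℝ => x ^ n * exp (-a * x ^ 2)) volume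
  simp only [hn.neg_pow, neg_sq, neg_mul, integral_neg] at h ⊢
  linarith

lemma integral_sq_mul_exp_neg_mul_sq (ha : 0 < a) :
    ∫ x : ℝ, x ^ 2 * exp (-a * x ^ 2) = √(π / a) / (2 * a) := by
  have hderiv (x : ℝ) : HasDerivAt (fun x => x * exp (-a * x ^ 2))
      (exp (-a * x ^ 2) - 2 * a * (x ^ 2 * exp (-a * x ^ 2))) x :=
    ((hasDerivAt_id' x).mul ((hasDerivAt_pow 2 x).const_mul (-a)).exp).congr_deriv (by ring)
  have hint := integrable_exp_neg_mul_sq ha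
  have hint2 := (integrable_pow_mul_exp_neg_mul_sq ha 2).const_mul (2 * a)
  have hzero := integral_eq_zero_of_hasDerivAt_of_integrable hderiv (hint.sub hint2)
    (integrable_mul_exp_neg_mul_sq ha)
  rw [integral_sub hint hint2, integral_const_mul, integral_gaussian] at hzero
  rw [eq_div_iff (by positivity)]
  linarith

lemma add_pow_mul_exp_neg_mul_sq_eq_sum (a c x : ℝ) (n : ℕ) :
    (x + c) ^ n * exp (-a * x ^ 2) =
      ∑ k ∈ Finset.range (n + 1), c ^ (n - k) * n.choose k * (x ^ k * exp (-a * x ^ 2)) := by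
  rw [add_pow, Finset.sum_mul]
  exact Finset.sum_congr rfl fun k _ => by ring

lemma integrable_add_pow_mul_exp_neg_mul_sq (ha : 0 < a) (c : ℝ) (n : ℕ) :
    Integrable fun x : ℝ => (x + c) ^ n * exp (-a * x ^ 2) := by
  simp_rw [add_pow_mul_exp_neg_mul_sq_eq_sum]
  exact integrable_finsetSum _ fun k _ => (integrable_pow_mul_exp_neg_mul_sq ha k).const_mul _

lemma integral_add_pow_mul_exp_neg_mul_sq (ha : 0 < a) (c : ℝ) (n : ℕ) :
    ∫ x : ℝ, (x + c) ^ n * exp (-a * x ^ 2) =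
      ∑ k ∈ Finset.range (n + 1),
        c ^ (n - k) * n.choose k * ∫ x : ℝ, x ^ k * exp (-a * x ^ 2) := by
  simp_rw [add_pow_mul_exp_neg_mul_sq_eq_sum, ← integral_const_mul]
  exact integral_finsetSum _ fun k _ => (integrable_pow_mul_exp_neg_mul_sq ha k).const_mul _

lemma integral_add_pow_three_mul_exp_neg_mul_sq (ha : 0 < a) (c : ℝ) :
    ∫ x : ℝ, (x + c) ^ 3 * exp (-a * x ^ 2) = √(π / a) * (3 * c / (2 * a) + c ^ 3) := by
  have h1 := integral_pow_mul_exp_neg_mul_sq_of_odd odd_one a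
  have h3 := integral_pow_mul_exp_neg_mul_sq_of_odd (by decide : Odd 3) a
  simp only [integral_add_pow_mul_exp_neg_mul_sq ha, Finset.sum_range_succ,
    Finset.sum_range_zero, h1, h3, integral_sq_mul_exp_neg_mul_sq ha, pow_zero, one_mul,
    integral_gaussian]
  norm_num
  ring

lemma exp_neg_mul_sq_add_mul (ha : a ≠ 0) (b x : ℝ) :
    exp (-a * x ^ 2 + b * x) = exp (b ^ 2 / (4 * a)) * exp (-a * (x - b / (2 * a)) ^ 2) := by
  rw [← exp_add]
  congr 1
  field_simp
  ring

lemma pow_mul_exp_neg_mul_sq_add_mul_eq (ha : a ≠ 0) (b x : ℝ) (n : ℕ) :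
    x ^ n * exp (-a * x ^ 2 + b * x) = exp (b ^ 2 / (4 * a)) *
      ((x - b / (2 * a) + b / (2 * a)) ^ n * exp (-a * (x - b / (2 * a)) ^ 2)) := by
  rw [sub_add_cancel, exp_neg_mul_sq_add_mul ha]
  ring

lemma integrable_pow_mul_exp_neg_mul_sq_add_mul (ha : 0 < a) (b : ℝ) (n : ℕ) :
    Integrable fun x : ℝ => x ^ n * exp (-a * x ^ 2 + b * x) := by
  simp_rw [pow_mul_exp_neg_mul_sq_add_mul_eq ha.ne']
  exact ((integrable_add_pow_mul_exp_neg_mul_sq ha _ n).comp_sub_right _).const_mul _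

lemma integral_pow_three_mul_exp_neg_mul_sq_add_mul (ha : 0 < a) (b : ℝ) :
    ∫ x : ℝ, x ^ 3 * exp (-a * x ^ 2 + b * x) =
      √(π / a) * b * (6 * a + b ^ 2) / (8 * a ^ 3) * exp (b ^ 2 / (4 * a)) := by
  simp_rw [pow_mul_exp_neg_mul_sq_add_mul_eq ha.ne', integral_const_mul]
  rw [integral_sub_right_eq_self (fun x => (x + b / (2 * a)) ^ 3 * exp (-a * x ^ 2)),
    integral_add_pow_three_mul_exp_neg_mul_sq ha]
  field_simp
  ring

end Gaussian

lemma integral_Ioi_add_comp_neg {E : Type*} [NormedAddCommGroup E] [NormedSpace ℝ E]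
    {f : ℝ → E} (hf : Integrable f) :
    ∫ x in Ioi 0, (f x + f (-x)) = ∫ x, f x := by
  rw [integral_add hf.integrableOn hf.comp_neg.integrableOn, integral_comp_neg_Ioi, neg_zero,
    ← compl_Ioi, integral_add_compl measurableSet_Ioi hf]

theorem stmt2 (a b : ℝ) (ha : 0 < a) :
    ∫ x in Ioi (0 : ℝ), x ^ 3 * Real.exp (-a * x ^ 2) * Real.sinh (b * x) =
      Real.sqrt π * b * (6 * a + b ^ 2) * Real.exp (b ^ 2 / (4 * a)) /
        (16 * a ^ ((7 : ℝ) / 2)) := by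
  have hsinh (x : ℝ) : x ^ 3 * exp (-a * x ^ 2) * sinh (b * x) =
      (x ^ 3 * exp (-a * x ^ 2 + b * x) + (-x) ^ 3 * exp (-a * (-x) ^ 2 + b * -x)) / 2 := by
    rw [sinh_eq, exp_add, exp_add, neg_sq, mul_neg]
    ring
  have hpow : a ^ ((7 : ℝ) / 2) = a ^ 3 * √a := by
    rw [show (7 : ℝ) / 2 = (3 : ℕ) + 1 / 2 by norm_num, rpow_add ha, rpow_natCast, sqrt_eq_rpow]
  rw [integral_congr_ae (ae_of_all _ hsinh), integral_div,
    integral_Ioi_add_comp_neg (integrable_pow_mul_exp_neg_mul_sq_add_mul ha b 3),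
    integral_pow_three_mul_exp_neg_mul_sq_add_mul ha, hpow, sqrt_div pi_pos.le]
  field_simp
  ring
end

section
/- For every real number a, the integral ∫₀^∞ erf(a x / √2) · exp(-x²/2) dx equals √(2/π) · arctan(a). -/
/-!
Substituting `u = x t / √2` writes `erf (a x / √2) exp (-x² / 2)` as
`√(2 / π) ∫₀ᵃ x exp (-(1 + t²) x² / 2) dt`. After exchanging the two integrals (Fubini), the inner
Gaussian moment `∫₀^∞ x exp (-(1 + t²) x² / 2) dx` equals `1 / (1 + t²)`, whose integral over
`[0, a]` is `arctan a`.
-/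

open Real MeasureTheory Set

theorem integral_Ioi_mul_exp_neg_mul_sq {b : ℝ} (hb : 0 < b) :
    ∫ x in Ioi (0 : ℝ), x * exp (-b * x ^ 2) = (2 * b)⁻¹ := by
  exact_mod_cast integral_mul_cexp_neg_mul_sq (b := (b : ℂ)) (by simpa using hb)

theorem erf_mul (c a : ℝ) :
    erf (c * a) = 2 / √π * c * ∫ t in (0 : ℝ)..a, exp (-(c * t) ^ 2) := by
  rw [erf, mul_assoc, intervalIntegral.mul_integral_comp_mul_left (f := fun u => exp (-u ^ 2)),
    mul_zero]

theorem erf_mul_exp_eq_integral (a x : ℝ) :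
    erf (a * x / √2) * exp (-x ^ 2 / 2) =
      √(2 / π) * ∫ t in (0 : ℝ)..a, x * exp (-((1 + t ^ 2) / 2) * x ^ 2) := by
  have hsqrt : √(2 / π) = 2 / √π / √2 := by
    rw [sqrt_div zero_le_two, div_div, eq_div_iff (by positivity)]
    field_simp
    rw [sq_sqrt zero_le_two]
  have hexp (t : ℝ) : exp (-(x / √2 * t) ^ 2) * exp (-x ^ 2 / 2) =
      exp (-((1 + t ^ 2) / 2) * x ^ 2) := by
    rw [← exp_add, div_mul_eq_mul_div, div_pow, sq_sqrt zero_le_two]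
    ring_nf
  have hintegral : ∫ t in (0 : ℝ)..a, x * exp (-((1 + t ^ 2) / 2) * x ^ 2) =
      x * exp (-x ^ 2 / 2) * ∫ t in (0 : ℝ)..a, exp (-(x / √2 * t) ^ 2) := by
    rw [← intervalIntegral.integral_const_mul]
    congr 1
    funext t
    rw [← hexp]
    ring
  rw [hintegral, show a * x / √2 = x / √2 * a by ring, erf_mul, hsqrt]
  field_simp

theorem integrable_mul_exp_neg_one_add_sq_mul_sq (μ : Measure ℝ) [IsFiniteMeasure μ]
    (s : Set ℝ) :
    Integrable (Function.uncurry fun t x : ℝ => x * exp (-((1 + t ^ 2) / 2) * x ^ 2))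
      (μ.prod (volume.restrict s)) := by
  have hdom : Integrable (fun z : ℝ × ℝ => 1 * ‖z.2 * exp (-(1 / 2) * z.2 ^ 2)‖)
      (μ.prod (volume.restrict s)) :=
    (integrable_const 1).mul_prod (integrable_mul_exp_neg_mul_sq one_half_pos).norm.restrict
  refine hdom.mono' (by fun_prop) (Filter.Eventually.of_forall fun z => ?_)
  simp only [Function.uncurry, one_mul, norm_mul, norm_of_nonneg (exp_pos _).le]
  gcongr
  nlinarith [mul_nonneg (sq_nonneg z.1) (sq_nonneg z.2)]

theorem stmt3 (a : ℝ) :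
    ∫ x in Ioi (0 : ℝ), erf (a * x / Real.sqrt 2) * Real.exp (-x ^ 2 / 2) =
      Real.sqrt (2 / π) * Real.arctan a := by
  have hinner (t : ℝ) :
      ∫ x in Ioi (0 : ℝ), x * exp (-((1 + t ^ 2) / 2) * x ^ 2) = (1 + t ^ 2)⁻¹ := by
    rw [integral_Ioi_mul_exp_neg_mul_sq (by positivity)]
    ring
  have : IsFiniteMeasure (volume.restrict (uIoc 0 a)) := isFiniteMeasure_restrict_Ioc _ _
  simp_rw [erf_mul_exp_eq_integral, integral_const_mul]
  rw [← intervalIntegral_integral_swap (integrable_mul_exp_neg_one_add_sq_mul_sq _ _)]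
  simp_rw [hinner, integral_inv_one_add_sq, arctan_zero, sub_zero]
end

section
/- Let h > 0 and let c < h be real. Then ∫₀^1 [ h (h − c) / (π θ^{3/2} (1 − θ)^{3/2}) ] · exp( − h²/(2θ) − (h − c)²/(2(1 − θ)) ) dθ = √(2/π) · (2h − c) · exp(−(2h − c)²/2). (Integrating the Shepp joint density of (argmax, max, close) over the argmax yields the joint density of (max, close).) -/
/-!
Substituting `θ = a² / (a² + x²)` with `a = h`, `b = h - c` turns the integral into
`(2 / π) e^{-(a + b)² / 2} ∫₀^∞ (b + a · ab / x²) e^{-(x - ab / x)² / 2} dx`.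
The inversion `x ↦ ab / x` shows that the weights `1` and `ab / x²` give the same integral,
and the Cauchy–Schlömilch substitution `y = x - ab / x` shows that their sum is
`∫ e^{-y² / 2} dy = √(2π)`; so each equals `√(2π) / 2`.
-/

open Real MeasureTheory Set

section Substitutions

variable {E : Type*} [NormedAddCommGroup E] [NormedSpace ℝ E] {c : ℝ}

lemma hasDerivAt_sub_const_div (c : ℝ) {x : ℝ} (hx : x ≠ 0) :
    HasDerivAt (fun x => x - c / x) (1 + c / x ^ 2) x := by
  simpa [div_eq_mul_inv] using (hasDerivAt_id' x).fun_sub ((hasDerivAt_inv hx).const_mul c)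

lemma strictMonoOn_sub_const_div (hc : 0 < c) : StrictMonoOn (fun x => x - c / x) (Ioi 0) :=
  fun _ hp _ _ hpq => sub_lt_sub hpq (div_lt_div_of_pos_left hc hp hpq)

lemma image_sub_const_div_Ioi (hc : 0 < c) : (fun x => x - c / x) '' Ioi 0 = univ := by
  refine eq_univ_of_forall fun y => ?_
  -- the positive root of `x ^ 2 - y * x - c = 0`
  set s := √(y ^ 2 + 4 * c)
  have hs : s ^ 2 = y ^ 2 + 4 * c := sq_sqrt (by positivity)
  have hys : |y| < s := (lt_sqrt (abs_nonneg y)).2 (by rw [sq_abs]; linarith)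
  have hx : 0 < (y + s) / 2 := by linarith [neg_abs_le y]
  have hroot : (y + s) / 2 * ((y + s) / 2 - y) = c := by nlinarith
  refine ⟨(y + s) / 2, hx, ?_⟩
  simp only
  rw [← hroot, mul_div_cancel_left₀ _ hx.ne']
  ring

theorem integral_Ioi_one_add_div_sq_smul_comp_sub_div (hc : 0 < c) (g : ℝ → E) :
    ∫ x in Ioi 0, (1 + c / x ^ 2) • g (x - c / x) = ∫ y, g y := by
  have := integral_image_eq_integral_abs_deriv_smul measurableSet_Ioi
    (fun x hx => (hasDerivAt_sub_const_div c (ne_of_gt hx)).hasDerivWithinAt)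
    (strictMonoOn_sub_const_div hc).injOn g
  rw [image_sub_const_div_Ioi hc, Measure.restrict_univ] at this
  rw [this]
  refine setIntegral_congr_fun measurableSet_Ioi fun x (hx : 0 < x) => ?_
  rw [abs_of_pos (by positivity)]

theorem integrableOn_Ioi_one_add_div_sq_smul_comp_sub_div_iff (hc : 0 < c) {g : ℝ → E} :
    IntegrableOn (fun x => (1 + c / x ^ 2) • g (x - c / x)) (Ioi 0) ↔ Integrable g := by
  have := integrableOn_image_iff_integrableOn_abs_deriv_smul measurableSet_Ioi
    (fun x hx => (hasDerivAt_sub_const_div c (ne_of_gt hx)).hasDerivWithinAt)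
    (strictMonoOn_sub_const_div hc).injOn g
  rw [image_sub_const_div_Ioi hc, integrableOn_univ] at this
  rw [this]
  refine integrableOn_congr_fun (fun x (hx : 0 < x) => ?_) measurableSet_Ioi
  rw [abs_of_pos (by positivity)]

theorem integral_Ioi_div_sq_smul_comp_div (hc : 0 < c) (f : ℝ → E) :
    ∫ x in Ioi 0, (c / x ^ 2) • f (c / x) = ∫ x in Ioi 0, f x := by
  have himage : (c / ·) '' Ioi (0 : ℝ) = Ioi 0 := by
    refine Subset.antisymm (image_subset_iff.2 fun x (hx : 0 < x) => div_pos hc hx) fun y hy => ?_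
    exact ⟨c / y, div_pos hc hy, div_div_cancel₀ hc.ne'⟩
  have hderiv (x : ℝ) (hx : 0 < x) : HasDerivAt (c / ·) (-(c / x ^ 2)) x := by
    simpa [div_eq_mul_inv] using (hasDerivAt_inv hx.ne').const_mul c
  have := integral_image_eq_integral_abs_deriv_smul measurableSet_Ioi
    (fun x hx => (hderiv x hx).hasDerivWithinAt) (fun x _ y _ hxy => ?_) f
  · rw [himage] at this
    rw [this]
    refine setIntegral_congr_fun measurableSet_Ioi fun x (hx : 0 < x) => ?_
    rw [abs_neg, abs_of_pos (by positivity)]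
  · simpa [div_div_cancel₀ hc.ne'] using congrArg (c / ·) hxy

theorem integral_Ioo_zero_one_eq_integral_Ioi_comp_sq_div_sq_add_sq {a : ℝ} (ha : a ≠ 0)
    (F : ℝ → E) :
    ∫ θ in Ioo 0 1, F θ =
      ∫ x in Ioi 0, (2 * a ^ 2 * x / (a ^ 2 + x ^ 2) ^ 2) • F (a ^ 2 / (a ^ 2 + x ^ 2)) := by
  have hD (x : ℝ) : 0 < a ^ 2 + x ^ 2 := by positivity
  have hderiv (x : ℝ) :
      HasDerivAt (fun x => a ^ 2 / (a ^ 2 + x ^ 2)) (-(2 * a ^ 2 * x / (a ^ 2 + x ^ 2) ^ 2)) x := by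
    refine ((hasDerivAt_const x (a ^ 2)).fun_div ((hasDerivAt_pow 2 x).const_add (a ^ 2))
      (hD x).ne').congr_deriv ?_
    norm_num
    ring
  have hanti : StrictAntiOn (fun x => a ^ 2 / (a ^ 2 + x ^ 2)) (Ioi 0) :=
    fun p (hp : 0 < p) q _ hpq => div_lt_div_of_pos_left (by positivity) (hD p) (by nlinarith)
  have himage : (fun x => a ^ 2 / (a ^ 2 + x ^ 2)) '' Ioi 0 = Ioo 0 1 := by
    refine Subset.antisymm (image_subset_iff.2 fun x (hx : 0 < x) => ?_)
      fun θ ⟨hθ0, hθ1⟩ => ?_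
    · exact ⟨by positivity, (div_lt_one (hD x)).2 (by nlinarith)⟩
    · have hpos : 0 < a ^ 2 * (1 - θ) / θ := by have := sub_pos.2 hθ1; positivity
      refine ⟨√(a ^ 2 * (1 - θ) / θ), sqrt_pos.2 hpos, ?_⟩
      simp only [sq_sqrt hpos.le]
      field_simp
      ring
  rw [← himage, integral_image_eq_integral_abs_deriv_smul measurableSet_Ioi
    (fun x _ => (hderiv x).hasDerivWithinAt) hanti.injOn]
  refine setIntegral_congr_fun measurableSet_Ioi fun x (hx : 0 < x) => ?_
  rw [abs_neg, abs_of_pos (by positivity)]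

end Substitutions

section GlasserIntegrals

variable {c : ℝ}

lemma integral_exp_neg_sq_div_two : ∫ y, exp (-y ^ 2 / 2) = √(2 * π) := by
  simp_rw [neg_div, div_eq_inv_mul, ← neg_mul, integral_gaussian]
  rw [div_inv_eq_mul, mul_comm]

lemma integrable_exp_neg_sq_div_two : Integrable fun y : ℝ => exp (-y ^ 2 / 2) := by
  simpa [neg_div, div_eq_inv_mul] using integrable_exp_neg_mul_sq (b := 2⁻¹) (by norm_num)

lemma integrableOn_Ioi_exp_neg_sub_div_sq (hc : 0 < c) :
    IntegrableOn (fun x => exp (-(x - c / x) ^ 2 / 2)) (Ioi 0) := by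
  have hsum := (integrableOn_Ioi_one_add_div_sq_smul_comp_sub_div_iff hc).2
    integrable_exp_neg_sq_div_two
  refine hsum.mono' (by fun_prop) ((ae_restrict_iff' measurableSet_Ioi).2 ?_)
  filter_upwards with x (hx : 0 < x)
  rw [norm_of_nonneg (exp_pos _).le, smul_eq_mul]
  exact le_mul_of_one_le_left (exp_pos _).le (by simp only [le_add_iff_nonneg_right]; positivity)

lemma integrableOn_Ioi_div_sq_mul_exp_neg_sub_div_sq (hc : 0 < c) :
    IntegrableOn (fun x => c / x ^ 2 * exp (-(x - c / x) ^ 2 / 2)) (Ioi 0) := by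
  have hsum := (integrableOn_Ioi_one_add_div_sq_smul_comp_sub_div_iff hc).2
    integrable_exp_neg_sq_div_two
  refine (hsum.sub (integrableOn_Ioi_exp_neg_sub_div_sq hc)).congr_fun (fun x _ => ?_)
    measurableSet_Ioi
  simp only [Pi.sub_apply, smul_eq_mul]
  ring

lemma integral_Ioi_div_sq_mul_exp_neg_sub_div_sq (hc : 0 < c) :
    ∫ x in Ioi 0, c / x ^ 2 * exp (-(x - c / x) ^ 2 / 2) =
      ∫ x in Ioi 0, exp (-(x - c / x) ^ 2 / 2) := by
  rw [← integral_Ioi_div_sq_smul_comp_div hc fun x => exp (-(x - c / x) ^ 2 / 2)]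
  refine setIntegral_congr_fun measurableSet_Ioi fun x _ => ?_
  rw [smul_eq_mul, div_div_cancel₀ hc.ne', ← neg_sub, neg_sq]

lemma integral_Ioi_exp_neg_sub_div_sq (hc : 0 < c) :
    ∫ x in Ioi 0, exp (-(x - c / x) ^ 2 / 2) = √(2 * π) / 2 := by
  have := integral_Ioi_one_add_div_sq_smul_comp_sub_div hc fun y => exp (-y ^ 2 / 2)
  simp only [smul_eq_mul, add_mul, one_mul] at this
  rw [integral_add (integrableOn_Ioi_exp_neg_sub_div_sq hc)
    (integrableOn_Ioi_div_sq_mul_exp_neg_sub_div_sq hc),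
    integral_Ioi_div_sq_mul_exp_neg_sub_div_sq hc, integral_exp_neg_sq_div_two] at this
  linarith

theorem integral_Ioi_add_mul_div_sq_mul_exp_neg_sub_div_sq (hc : 0 < c) (α β : ℝ) :
    ∫ x in Ioi 0, (α + β * (c / x ^ 2)) * exp (-(x - c / x) ^ 2 / 2) =
      (α + β) * √(2 * π) / 2 := by
  simp_rw [add_mul, mul_assoc]
  rw [integral_add ((integrableOn_Ioi_exp_neg_sub_div_sq hc).const_mul α)
    ((integrableOn_Ioi_div_sq_mul_exp_neg_sub_div_sq hc).const_mul β),
    integral_const_mul, integral_const_mul, integral_Ioi_div_sq_mul_exp_neg_sub_div_sq hc,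
    integral_Ioi_exp_neg_sub_div_sq hc]
  ring

end GlasserIntegrals

/-- `sheppDensity h (h - c) θ` is `p(θ, h, c)`. -/
noncomputable def sheppDensity (a b θ : ℝ) : ℝ :=
  a * b / (π * θ ^ ((3 : ℝ) / 2) * (1 - θ) ^ ((3 : ℝ) / 2)) *
    exp (-a ^ 2 / (2 * θ) - b ^ 2 / (2 * (1 - θ)))

lemma mul_sheppDensity_sq_div_sq_add_sq {a b x : ℝ} (ha : 0 < a) (hb : 0 < b) (hx : 0 < x) :
    2 * a ^ 2 * x / (a ^ 2 + x ^ 2) ^ 2 * sheppDensity a b (a ^ 2 / (a ^ 2 + x ^ 2)) =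
      2 / π * exp (-(a + b) ^ 2 / 2) *
        ((b + a * (a * b / x ^ 2)) * exp (-(x - a * b / x) ^ 2 / 2)) := by
  have hcompl : 1 - a ^ 2 / (a ^ 2 + x ^ 2) = x ^ 2 / (a ^ 2 + x ^ 2) := by field_simp; ring
  have hpow :
      π * (a ^ 2 / (a ^ 2 + x ^ 2)) ^ ((3 : ℝ) / 2) * (x ^ 2 / (a ^ 2 + x ^ 2)) ^ ((3 : ℝ) / 2) =
        π * (a * x / (a ^ 2 + x ^ 2)) ^ 3 := by
    rw [mul_assoc, ← mul_rpow (by positivity) (by positivity),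
      show a ^ 2 / (a ^ 2 + x ^ 2) * (x ^ 2 / (a ^ 2 + x ^ 2)) = (a * x / (a ^ 2 + x ^ 2)) ^ 2 by
        ring, ← rpow_natCast _ 2, ← rpow_mul (by positivity)]
    norm_num
  have hexp : -a ^ 2 / (2 * (a ^ 2 / (a ^ 2 + x ^ 2))) - b ^ 2 / (2 * (x ^ 2 / (a ^ 2 + x ^ 2)))
      = -(a + b) ^ 2 / 2 + -(x - a * b / x) ^ 2 / 2 := by
    field_simp
    ring
  rw [sheppDensity, hcompl, hpow, hexp, exp_add]
  field_simp
  ring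

theorem integral_Ioo_sheppDensity {a b : ℝ} (ha : 0 < a) (hb : 0 < b) :
    ∫ θ in Ioo 0 1, sheppDensity a b θ = √(2 / π) * (a + b) * exp (-(a + b) ^ 2 / 2) := by
  rw [integral_Ioo_zero_one_eq_integral_Ioi_comp_sq_div_sq_add_sq ha.ne',
    setIntegral_congr_fun measurableSet_Ioi fun x (hx : 0 < x) => by
      rw [smul_eq_mul, mul_sheppDensity_sq_div_sq_add_sq ha hb hx],
    integral_const_mul, integral_Ioi_add_mul_div_sq_mul_exp_neg_sub_div_sq (mul_pos ha hb)]
  have hsqrt : √(2 * π) = √(2 / π) * π := by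
    rw [show 2 * π = 2 / π * (π * π) by field_simp, sqrt_mul (by positivity),
      sqrt_mul_self pi_pos.le]
  rw [hsqrt]
  field_simp
  ring

theorem stmt14 (h c : ℝ) (hh : 0 < h) (hc : c < h) :
    ∫ θ in Ioo (0 : ℝ) 1,
        h * (h - c) / (π * θ ^ ((3 : ℝ) / 2) * (1 - θ) ^ ((3 : ℝ) / 2)) *
          Real.exp (-h ^ 2 / (2 * θ) - (h - c) ^ 2 / (2 * (1 - θ))) =
      Real.sqrt (2 / π) * (2 * h - c) * Real.exp (-(2 * h - c) ^ 2 / 2) := by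
  have := integral_Ioo_sheppDensity hh (sub_pos.2 hc)
  rwa [show h + (h - c) = 2 * h - c by ring] at this
end
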